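/- The function φ₂(x) = x·f_1(x)/f_2(x) is convex on (0,∞) (its second derivative is positive there) and strictly increasing on (0,∞); moreover for every x > 0 one has φ₂(x) ≥ 2 and 1/3 ≤ φ₂′(x) ≤ 1. -/

import Mathlib

/-- `f k x = e^x - ∑_{i=0}^{k-1} x^i / i!`. -/
noncomputable def f (k : ℕ) (x : ℝ) : ℝ :=
  Real.exp x - ∑ i ∈ Finset.range k, x ^ i / (Nat.factorial i : ℝ)

/-- `φ₂(x) = x f₁(x)/f₂(x)`. -/
noncomputable def phi2 (x : ℝ) : ℝ := x * f 1 x / f 2 x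

open Real Set

/-! ### Generic positivity-from-derivative helpers -/

private lemma aux_nonneg {F F' : ℝ → ℝ} (hd : ∀ x, HasDerivAt F (F' x) x)
    (h0 : F 0 = 0) (h' : ∀ x, 0 < x → 0 ≤ F' x) : ∀ x, 0 ≤ x → 0 ≤ F x := by
  intro x hx
  have hm : MonotoneOn F (Ici 0) := by
    apply monotoneOn_of_deriv_nonneg (convex_Ici 0)
      (fun y _ => (hd y).continuousAt.continuousWithinAt)
      (fun y _ => (hd y).differentiableAt.differentiableWithinAt)
    intro y hy
    rw [interior_Ici] at hy
    rw [(hd y).deriv]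
    exact h' y hy
  have := hm (mem_Ici.2 le_rfl) (mem_Ici.2 hx) hx
  rwa [h0] at this

private lemma aux_pos {F F' : ℝ → ℝ} (hd : ∀ x, HasDerivAt F (F' x) x)
    (h0 : F 0 = 0) (h' : ∀ x, 0 < x → 0 < F' x) : ∀ x, 0 < x → 0 < F x := by
  intro x hx
  have hm : StrictMonoOn F (Ici 0) := by
    apply strictMonoOn_of_deriv_pos (convex_Ici 0)
      (fun y _ => (hd y).continuousAt.continuousWithinAt)
    intro y hy
    rw [interior_Ici] at hy
    rw [(hd y).deriv]
    exact h' y hy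
  have := hm (mem_Ici.2 le_rfl) (mem_Ici.2 hx.le) hx
  rwa [h0] at this

/-! ### The chain for `r(x) = (x-2)eˣ + x + 2 ≥ 0` -/

private lemma r1_nonneg : ∀ x : ℝ, 0 ≤ x → 0 ≤ (x - 1) * Real.exp x + 1 := by
  apply aux_nonneg (F' := fun x => x * Real.exp x)
  · intro x
    have h := (((hasDerivAt_id' (𝕜 := ℝ) x)).sub_const 1).mul (Real.hasDerivAt_exp x)
    have h2 := h.add_const 1
    refine h2.congr_deriv ?_
    push_cast; ring
  · norm_num
  · intro x hx; positivity

private lemma r_nonneg : ∀ x : ℝ, 0 ≤ x → 0 ≤ (x - 2) * Real.exp x + x + 2 := by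
  apply aux_nonneg (F' := fun x => (x - 1) * Real.exp x + 1)
  · intro x
    have h := (((((hasDerivAt_id' (𝕜 := ℝ) x)).sub_const 2).mul (Real.hasDerivAt_exp x)).add
      (hasDerivAt_id' (𝕜 := ℝ) x)).add_const 2
    refine h.congr_deriv ?_ <;> (push_cast; ring)
  · norm_num
  · intro x hx; exact r1_nonneg x hx.le

/-! ### The chain for `h(x) = 2e²ˣ + (-3x²+2x-4)eˣ + (-x²-2x+2) ≥ 0` -/

private lemma exp_quad (x : ℝ) (hx : 0 ≤ x) : 3 * x ^ 2 + 16 * x + 16 ≤ 16 * Real.exp x := by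
  have h1 : x / 2 + 1 ≤ Real.exp (x / 2) := Real.add_one_le_exp (x / 2)
  have h2 : Real.exp (x / 2) * Real.exp (x / 2) = Real.exp x := by
    rw [← Real.exp_add]; ring_nf
  nlinarith [Real.exp_pos (x / 2), sq_nonneg x]

private lemma h2_nonneg : ∀ x : ℝ, 0 ≤ x →
    0 ≤ 8 * Real.exp x ^ 2 + (-3 * x ^ 2 - 10 * x - 6) * Real.exp x - 2 := by
  apply aux_nonneg (F' := fun x => 16 * Real.exp x ^ 2 + (-3 * x ^ 2 - 16 * x - 16) * Real.exp x)
  · intro x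
    have hpoly : HasDerivAt (fun y : ℝ => -3 * y ^ 2 - 10 * y - 6) (-3 * (2 * x ^ 1) - 10 * 1) x :=
      (((hasDerivAt_pow 2 x).const_mul (-3 : ℝ)).sub ((hasDerivAt_id' (𝕜 := ℝ) x).const_mul 10)).sub_const 6
    have h := ((((Real.hasDerivAt_exp x).pow 2).const_mul (8 : ℝ)).add
      (hpoly.mul (Real.hasDerivAt_exp x))).sub_const 2
    refine h.congr_deriv ?_ <;> (push_cast; ring)
  · norm_num
  · intro x hx
    have h := exp_quad x hx.le
    nlinarith [Real.exp_pos x]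

private lemma h1_nonneg : ∀ x : ℝ, 0 ≤ x →
    0 ≤ 4 * Real.exp x ^ 2 + (-3 * x ^ 2 - 4 * x - 2) * Real.exp x - 2 * x - 2 := by
  apply aux_nonneg
    (F' := fun x => 8 * Real.exp x ^ 2 + (-3 * x ^ 2 - 10 * x - 6) * Real.exp x - 2)
  · intro x
    have hpoly : HasDerivAt (fun y : ℝ => -3 * y ^ 2 - 4 * y - 2) (-3 * (2 * x ^ 1) - 4 * 1) x :=
      (((hasDerivAt_pow 2 x).const_mul (-3 : ℝ)).sub ((hasDerivAt_id' (𝕜 := ℝ) x).const_mul 4)).sub_const 2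
    have h := (((((Real.hasDerivAt_exp x).pow 2).const_mul (4 : ℝ)).add
      (hpoly.mul (Real.hasDerivAt_exp x))).sub ((hasDerivAt_id' (𝕜 := ℝ) x).const_mul 2)).sub_const 2
    refine h.congr_deriv ?_ <;> (push_cast; ring)
  · norm_num
  · intro x hx; exact h2_nonneg x hx.le

private lemma h0_nonneg : ∀ x : ℝ, 0 ≤ x →
    0 ≤ 2 * Real.exp x ^ 2 + (-3 * x ^ 2 + 2 * x - 4) * Real.exp x + (-x ^ 2 - 2 * x + 2) := by
  apply aux_nonneg
    (F' := fun x => 4 * Real.exp x ^ 2 + (-3 * x ^ 2 - 4 * x - 2) * Real.exp x - 2 * x - 2)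
  · intro x
    have hpoly : HasDerivAt (fun y : ℝ => -3 * y ^ 2 + 2 * y - 4) (-3 * (2 * x ^ 1) + 2 * 1) x :=
      (((hasDerivAt_pow 2 x).const_mul (-3 : ℝ)).add ((hasDerivAt_id' (𝕜 := ℝ) x).const_mul 2)).sub_const 4
    have hpoly2 : HasDerivAt (fun y : ℝ => -y ^ 2 - 2 * y + 2) (-(2 * x ^ 1) - 2 * 1) x :=
      (((hasDerivAt_pow 2 x).neg).sub ((hasDerivAt_id' (𝕜 := ℝ) x).const_mul 2)).add_const 2
    have h := ((((Real.hasDerivAt_exp x).pow 2).const_mul (2 : ℝ)).add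
      (hpoly.mul (Real.hasDerivAt_exp x))).add hpoly2
    refine h.congr_deriv ?_ <;> (push_cast; ring)
  · norm_num
  · intro x hx; exact h1_nonneg x hx.le

/-! ### The chain for `q(x) = (2x-6)eˣ + x² + 4x + 6 > 0` for `x > 0` -/

private lemma q2_pos : ∀ x : ℝ, 0 < x → 0 < (2 * x - 2) * Real.exp x + 2 := by
  apply aux_pos (F' := fun x => 2 * x * Real.exp x)
  · intro x
    have h := ((((hasDerivAt_id' (𝕜 := ℝ) x).const_mul 2).sub_const 2).mul
      (Real.hasDerivAt_exp x)).add_const 2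
    refine h.congr_deriv ?_ <;> (push_cast; ring)
  · norm_num
  · intro x hx; positivity

private lemma q1_pos : ∀ x : ℝ, 0 < x → 0 < (2 * x - 4) * Real.exp x + 2 * x + 4 := by
  apply aux_pos (F' := fun x => (2 * x - 2) * Real.exp x + 2)
  · intro x
    have h := (((((hasDerivAt_id' (𝕜 := ℝ) x).const_mul 2).sub_const 4).mul
      (Real.hasDerivAt_exp x)).add ((hasDerivAt_id' (𝕜 := ℝ) x).const_mul 2)).add_const 4
    refine h.congr_deriv ?_ <;> (push_cast; ring)
  · norm_num
  · intro x hx; exact q2_pos x hx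

private lemma q0_pos : ∀ x : ℝ, 0 < x → 0 < (2 * x - 6) * Real.exp x + x ^ 2 + 4 * x + 6 := by
  apply aux_pos (F' := fun x => (2 * x - 4) * Real.exp x + 2 * x + 4)
  · intro x
    have h := ((((((hasDerivAt_id' (𝕜 := ℝ) x).const_mul 2).sub_const 6).mul
      (Real.hasDerivAt_exp x)).add (hasDerivAt_pow 2 x)).add
      ((hasDerivAt_id' (𝕜 := ℝ) x).const_mul 4)).add_const 6
    refine h.congr_deriv ?_ <;> (push_cast; ring)
  · norm_num
  · intro x hx; exact q1_pos x hx

/-! ### Positivity of the second-derivative numerator `N` -/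

private lemma N_pos : ∀ x : ℝ, 0 < x →
    0 < (x ^ 2 - 4 * x + 2) * Real.exp x ^ 2 + (x ^ 3 + x ^ 2 + 4 * x - 4) * Real.exp x + 2 := by
  apply aux_pos
    (F' := fun x => x * Real.exp x * ((2 * x - 6) * Real.exp x + x ^ 2 + 4 * x + 6))
  · intro x
    have hp1 : HasDerivAt (fun y : ℝ => y ^ 2 - 4 * y + 2) (2 * x ^ 1 - 4 * 1) x :=
      ((hasDerivAt_pow 2 x).sub ((hasDerivAt_id' (𝕜 := ℝ) x).const_mul 4)).add_const 2
    have hp2 : HasDerivAt (fun y : ℝ => y ^ 3 + y ^ 2 + 4 * y - 4)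
        (3 * x ^ 2 + 2 * x ^ 1 + 4 * 1) x := by
      have := (((hasDerivAt_pow 3 x).add (hasDerivAt_pow 2 x)).add
        ((hasDerivAt_id' (𝕜 := ℝ) x).const_mul 4)).sub_const 4
      refine this.congr_deriv ?_ <;> (push_cast; ring)
    have h := ((hp1.mul ((Real.hasDerivAt_exp x).pow 2)).add
      (hp2.mul (Real.hasDerivAt_exp x))).add_const 2
    refine h.congr_deriv ?_ <;> (simp only [Pi.pow_apply]; push_cast; ring)
  · norm_num
  · intro x hx
    have hq := q0_pos x hx
    have he := Real.exp_pos x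
    positivity

/-! ### Basic facts about `phi2` -/

private lemma phi2_apply (x : ℝ) :
    phi2 x = x * (Real.exp x - 1) / (Real.exp x - 1 - x) := by
  simp [phi2, f, Finset.sum_range_succ]
  ring_nf

private lemma Q_pos {x : ℝ} (hx : 0 < x) : 0 < Real.exp x - 1 - x := by
  have := Real.add_one_lt_exp (ne_of_gt hx)
  linarith

private lemma hasDerivAt_phi2 {x : ℝ} (hx : 0 < x) :
    HasDerivAt phi2
      (((Real.exp x - 1 + x * Real.exp x) * (Real.exp x - 1 - x) -
          x * (Real.exp x - 1) * (Real.exp x - 1)) / (Real.exp x - 1 - x) ^ 2) x := by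
  have hQ : Real.exp x - 1 - x ≠ 0 := (Q_pos hx).ne'
  have hP : HasDerivAt (fun y : ℝ => y * (Real.exp y - 1))
      (1 * (Real.exp x - 1) + x * Real.exp x) x :=
    (hasDerivAt_id' (𝕜 := ℝ) x).mul ((Real.hasDerivAt_exp x).sub_const 1)
  have hQd : HasDerivAt (fun y : ℝ => Real.exp y - 1 - y) (Real.exp x - 1) x := by
    have h := ((Real.hasDerivAt_exp x).sub_const 1).sub (hasDerivAt_id' (𝕜 := ℝ) x)
    exact h
  have h := hP.div hQd hQ
  have heq : phi2 = fun y : ℝ => y * (Real.exp y - 1) / (Real.exp y - 1 - y) := by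
    funext y; exact phi2_apply y
  rw [heq]
  refine h.congr_deriv ?_
  ring

private lemma deriv_phi2 {x : ℝ} (hx : 0 < x) :
    deriv phi2 x = ((Real.exp x - 1 + x * Real.exp x) * (Real.exp x - 1 - x) -
        x * (Real.exp x - 1) * (Real.exp x - 1)) / (Real.exp x - 1 - x) ^ 2 :=
  (hasDerivAt_phi2 hx).deriv

private lemma deriv2_phi2 {x : ℝ} (hx : 0 < x) :
    deriv (deriv phi2) x =
      ((x ^ 2 - 4 * x + 2) * Real.exp x ^ 2 + (x ^ 3 + x ^ 2 + 4 * x - 4) * Real.exp x + 2) /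
        (Real.exp x - 1 - x) ^ 3 := by
  have hQ : Real.exp x - 1 - x ≠ 0 := (Q_pos hx).ne'
  have hQd : HasDerivAt (fun y : ℝ => Real.exp y - 1 - y) (Real.exp x - 1) x := by
    have h := ((Real.hasDerivAt_exp x).sub_const 1).sub (hasDerivAt_id' (𝕜 := ℝ) x)
    exact h
  have hNum : HasDerivAt
      (fun y : ℝ => (Real.exp y - 1 + y * Real.exp y) * (Real.exp y - 1 - y) -
        y * (Real.exp y - 1) * (Real.exp y - 1))
      ((Real.exp x + (1 * Real.exp x + x * Real.exp x)) * (Real.exp x - 1 - x) +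
        (Real.exp x - 1 + x * Real.exp x) * (Real.exp x - 1) -
        ((1 * (Real.exp x - 1) + x * Real.exp x) * (Real.exp x - 1) +
          x * (Real.exp x - 1) * Real.exp x)) x := by
    have hA : HasDerivAt (fun y : ℝ => Real.exp y - 1 + y * Real.exp y)
        (Real.exp x + (1 * Real.exp x + x * Real.exp x)) x :=
      ((Real.hasDerivAt_exp x).sub_const 1).add
        ((hasDerivAt_id' (𝕜 := ℝ) x).mul (Real.hasDerivAt_exp x))
    have hB : HasDerivAt (fun y : ℝ => y * (Real.exp y - 1))
        (1 * (Real.exp x - 1) + x * Real.exp x) x :=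
      (hasDerivAt_id' (𝕜 := ℝ) x).mul ((Real.hasDerivAt_exp x).sub_const 1)
    exact (hA.mul hQd).sub ((hB.mul ((Real.hasDerivAt_exp x).sub_const 1)))
  have hD1 : HasDerivAt
      (fun y : ℝ => ((Real.exp y - 1 + y * Real.exp y) * (Real.exp y - 1 - y) -
          y * (Real.exp y - 1) * (Real.exp y - 1)) / (Real.exp y - 1 - y) ^ 2)
      (((x ^ 2 - 4 * x + 2) * Real.exp x ^ 2 + (x ^ 3 + x ^ 2 + 4 * x - 4) * Real.exp x + 2) /
        (Real.exp x - 1 - x) ^ 3) x := by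
    have h := hNum.div (hQd.pow 2) (pow_ne_zero 2 hQ)
    refine h.congr_deriv ?_
    simp only [Pi.pow_apply]
    field_simp
    ring
  have hev : deriv phi2 =ᶠ[nhds x] fun y : ℝ =>
      ((Real.exp y - 1 + y * Real.exp y) * (Real.exp y - 1 - y) -
        y * (Real.exp y - 1) * (Real.exp y - 1)) / (Real.exp y - 1 - y) ^ 2 :=
    Filter.eventuallyEq_of_mem (Ioi_mem_nhds hx) fun y hy => (hasDerivAt_phi2 hy).deriv
  rw [hev.deriv_eq, hD1.deriv]

/-- key bounds on the first-derivative numerator -/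
private lemma Num_bounds {x : ℝ} (hx : 0 < x) :
    (Real.exp x - 1 - x) ^ 2 ≤
        3 * ((Real.exp x - 1 + x * Real.exp x) * (Real.exp x - 1 - x) -
          x * (Real.exp x - 1) * (Real.exp x - 1)) ∧
      (Real.exp x - 1 + x * Real.exp x) * (Real.exp x - 1 - x) -
          x * (Real.exp x - 1) * (Real.exp x - 1) ≤ (Real.exp x - 1 - x) ^ 2 := by
  constructor
  · have h := h0_nonneg x hx.le
    nlinarith [h]
  · have h := r_nonneg x hx.le
    nlinarith [mul_nonneg hx.le h]

theorem phi2_properties :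
    ConvexOn ℝ (Set.Ioi (0 : ℝ)) phi2 ∧
      (∀ x : ℝ, 0 < x → 0 < deriv (deriv phi2) x) ∧
      StrictMonoOn phi2 (Set.Ioi (0 : ℝ)) ∧
      ∀ x : ℝ, 0 < x → 2 ≤ phi2 x ∧ 1 / 3 ≤ deriv phi2 x ∧ deriv phi2 x ≤ 1 := by
  have hcont : ContinuousOn phi2 (Set.Ioi (0 : ℝ)) := fun y hy =>
    (hasDerivAt_phi2 hy).continuousAt.continuousWithinAt
  have hderiv2 : ∀ x : ℝ, 0 < x → 0 < deriv (deriv phi2) x := by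
    intro x hx
    rw [deriv2_phi2 hx]
    exact div_pos (N_pos x hx) (pow_pos (Q_pos hx) 3)
  have hNumpos : ∀ x : ℝ, 0 < x → 0 < (Real.exp x - 1 + x * Real.exp x) * (Real.exp x - 1 - x) -
      x * (Real.exp x - 1) * (Real.exp x - 1) := by
    intro x hx
    have h := (Num_bounds hx).1
    nlinarith [pow_pos (Q_pos hx) 2]
  refine ⟨?_, hderiv2, ?_, ?_⟩
  · -- convexity
    apply (strictConvexOn_of_deriv2_pos (convex_Ioi 0) hcont ?_).convexOn
    intro x hx
    rw [interior_Ioi] at hx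
    show 0 < deriv (deriv phi2) x
    exact hderiv2 x hx
  · -- strict monotonicity
    apply strictMonoOn_of_deriv_pos (convex_Ioi 0) hcont
    intro x hx
    rw [interior_Ioi] at hx
    rw [deriv_phi2 hx]
    exact div_pos (hNumpos x hx) (pow_pos (Q_pos hx) 2)
  · -- pointwise bounds
    intro x hx
    have hQ := Q_pos hx
    have hQ2 : (0 : ℝ) < (Real.exp x - 1 - x) ^ 2 := pow_pos hQ 2
    refine ⟨?_, ?_, ?_⟩
    · rw [phi2_apply, le_div_iff₀ hQ]
      have h := r_nonneg x hx.le
      nlinarith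
    · rw [deriv_phi2 hx, le_div_iff₀ hQ2]
      have h := (Num_bounds hx).1
      linarith
    · rw [deriv_phi2 hx, div_le_one hQ2]
      exact (Num_bounds hx).2
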